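/- Let κ be an odd integer, let c = q·r where 4 | r and gcd(q, r) = 1 (so q is odd), let m, n be integers, and let Ψ be a Dirichlet character mod c. Suppose Ψ_r and Ψ_q are Dirichlet characters mod r and mod q respectively with Ψ(x) = Ψ_r(x) Ψ_q(x) for all integers x. Then K_{κ,Ψ}(m, n; c) = K_{κ−q+1, Ψ_r}(m q̄, n q̄; r) · S_{Ψ_q}(m r̄, n r̄; q), where q̄ is an inverse of q mod r and r̄ is an inverse of r mod q (and κ − q + 1 is again odd). -/

import Mathlib

open Finset

/-!
Write `d mod qr` as a pair of residues mod `q` and mod `r` (Chinese remainder theorem). The Jacobi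
symbol splits as `(qr|d) = (q|d) (r|d)`, and quadratic reciprocity turns `ε_d^{-κ} (q|d)` into
`ε_d^{-(κ-q+1)} (d|q)` because `ε_d^{q-1} = (-1)^{(q-1)/2 · (d-1)/2}`. The phase splits through
`x ≡ q (q̄ x) + r (r̄ x) (mod qr)`. Since `4 ∣ r`, the factors attached to `r`, including `(r|d)`,
depend only on `d mod r`, so the sum over `d mod qr` becomes a product of the two sums.
-/

/-- `e(x) = exp(2πi x)`. -/
noncomputable def eC (x : ℝ) : ℂ := Complex.exp (2 * Real.pi * Complex.I * x)

/-- `ε_d = 1` if `d ≡ 1 (mod 4)`, `ε_d = i` if `d ≡ 3 (mod 4)`. -/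
noncomputable def epsd (d : ℕ) : ℂ := if d % 4 = 1 then 1 else Complex.I

/-- The twisted Kloosterman sum
`K_{κ,χ}(m,n;c) = ∑_{d mod c, (d,c)=1} ε_d^{−κ} (c|d) χ(d) e((m d + n d̄)/c)`,
where `(c|d)` is the Jacobi symbol and `d̄` is the inverse of `d` mod `c`. -/
noncomputable def KlSum (κ : ℤ) (c : ℕ) (χ : DirichletCharacter ℂ c) (m n : ℤ) : ℂ :=
  ∑ d ∈ (Finset.Icc 1 c).filter (fun d => Nat.Coprime d c),
    (epsd d) ^ (-κ) * (jacobiSym (c : ℤ) d : ℂ) * χ ((d : ZMod c)) *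
      eC ((((m * d + n * ((((d : ZMod c)⁻¹).val : ℤ))) : ℤ) : ℝ) / c)

/-- The twisted Salié sum
`S_Ψ(m,n;q) = ∑_{x mod q, (x,q)=1} (x|q) Ψ(x) e((m x + n x̄)/q)`. -/
noncomputable def SalPsi (q : ℕ) (Ψ : DirichletCharacter ℂ q) (m n : ℤ) : ℂ :=
  ∑ x ∈ (Finset.Icc 1 q).filter (fun x => Nat.Coprime x q),
    (jacobiSym (x : ℤ) q : ℂ) * Ψ ((x : ZMod q)) *
      eC ((((m * x + n * ((((x : ZMod q)⁻¹).val : ℤ))) : ℤ) : ℝ) / q)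

lemma eC_add (x y : ℝ) : eC (x + y) = eC x * eC y := by
  rw [eC, eC, eC, ← Complex.exp_add]
  push_cast
  ring_nf

lemma eC_intCast (k : ℤ) : eC k = 1 := by
  rw [eC, ← Complex.exp_int_mul_two_pi_mul_I k]
  push_cast
  ring_nf

lemma eC_intCast_div_eq_of_modEq {c : ℕ} {a b : ℤ} (h : a ≡ b [ZMOD c]) :
    eC (a / c) = eC (b / c) := by
  obtain ⟨k, hk⟩ := h.dvd
  rcases eq_or_ne c 0 with rfl | hc
  · simp
  have hb : (b : ℝ) / c = a / c + k := by
    rw [show b = a + c * k by linarith]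
    push_cast
    field_simp
  rw [hb, eC_add, eC_intCast, mul_one]

lemma eC_intCast_div_mul_eq_mul {q r : ℕ} (hqr : q.Coprime r) (hq : q ≠ 0) (hr : r ≠ 0)
    {S T U : ℤ} (hT : T * q ≡ S [ZMOD r]) (hU : U * r ≡ S [ZMOD q]) :
    eC (S / (q * r : ℕ)) = eC (T / r) * eC (U / q) := by
  have hS : T * q + U * r ≡ S [ZMOD (q * r : ℕ)] := by
    rw [Nat.cast_mul, ← Int.modEq_and_modEq_iff_modEq_mul (by simpa using hqr)]
    constructor
    · simpa using (Int.modEq_zero_iff_dvd.2 (dvd_mul_left (q : ℤ) T)).add hU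
    · simpa using hT.add (Int.modEq_zero_iff_dvd.2 (dvd_mul_left (r : ℤ) U))
  rw [← eC_intCast_div_eq_of_modEq hS, ← eC_add]
  congr 1
  push_cast
  field_simp

lemma epsd_mod_of_four_dvd {c : ℕ} (h4 : 4 ∣ c) (d : ℕ) : epsd (d % c) = epsd d := by
  rw [epsd, epsd, Nat.mod_mod_of_dvd d h4]

lemma epsd_sq {d : ℕ} (hd : Odd d) : epsd d ^ 2 = (-1) ^ (d / 2) := by
  have hd2 := Nat.odd_iff.1 hd
  rcases (by omega : d % 4 = 1 ∨ d % 4 = 3) with h | h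
  · rw [epsd, if_pos h, one_pow, Even.neg_one_pow (Nat.even_iff.2 (by omega))]
  · rw [epsd, if_neg (by omega), Complex.I_sq, Odd.neg_one_pow (Nat.odd_iff.2 (by omega))]

lemma epsd_zpow_mul_jacobiSym_reciprocity {d q : ℕ} (hd : Odd d) (hq : Odd q) (κ : ℤ) :
    epsd d ^ (-κ) * (jacobiSym q d : ℂ) = epsd d ^ (-(κ - q + 1)) * (jacobiSym d q : ℂ) := by
  have hne : epsd d ≠ 0 := by unfold epsd; split_ifs <;> simp
  have hκ : -κ = -(κ - q + 1) - 2 * ((q / 2 : ℕ) : ℤ) := by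
    have : (q : ℤ) = 2 * ((q / 2 : ℕ) : ℤ) + 1 := by
      exact_mod_cast (Nat.two_mul_div_two_add_one_of_odd hq).symm
    linarith
  rw [jacobiSym.quadratic_reciprocity hq hd, hκ, zpow_sub₀ hne, zpow_mul, zpow_ofNat, epsd_sq hd,
    zpow_natCast, ← pow_mul, mul_comm (d / 2)]
  push_cast
  field_simp

lemma jacobiSym_mod_right_of_four_dvd {c d : ℕ} (h4 : 4 ∣ c) (hd : Odd d) :
    jacobiSym c (d % c) = jacobiSym c d := by
  obtain ⟨k, rfl⟩ := h4
  have hdk : Odd (d % (4 * k)) := by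
    rw [Nat.odd_iff, Nat.mod_mod_of_dvd d (dvd_mul_of_dvd_left (by norm_num) k)]
    exact Nat.odd_iff.1 hd
  have hfour : ∀ x : ℕ, Odd x → jacobiSym (4 * k : ℕ) x = jacobiSym k x := fun x hx => by
    rw [Nat.cast_mul, jacobiSym.mul_left, show ((4 : ℕ) : ℤ) = 2 ^ 2 by norm_num,
      jacobiSym.sq_one' (by simpa [Int.gcd] using Nat.coprime_two_left.2 hx), one_mul]
  rw [hfour _ hdk, hfour _ hd, jacobiSym.mod_right' k hd]

def reducedResidues (c : ℕ) : Finset ℕ := (Icc 1 c).filter (fun d => Nat.Coprime d c)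

lemma mem_reducedResidues {c d : ℕ} :
    d ∈ reducedResidues c ↔ (1 ≤ d ∧ d ≤ c) ∧ d.Coprime c := by
  rw [reducedResidues, mem_filter, mem_Icc]

lemma sum_reducedResidues_eq_sum_units {M : Type*} [AddCommMonoid M] {c : ℕ} [NeZero c]
    (f : ℕ → M) (hf : ∀ d, d.Coprime c → f (d % c) = f d) :
    ∑ d ∈ reducedResidues c, f d = ∑ u : (ZMod c)ˣ, f (u : ZMod c).val := by
  -- `d = c` stands for the residue `0`, a unit only when `c = 1`
  refine sum_bij' (fun d hd => ZMod.unitOfCoprime d (mem_reducedResidues.1 hd).2)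
    (fun u _ => if (u : ZMod c).val = 0 then c else (u : ZMod c).val) (fun _ _ => mem_univ _)
    (fun u _ => ?_) (fun d hd => ?_) (fun u _ => ?_) (fun d hd => ?_)
  · have hu := ZMod.val_coe_unit_coprime u
    split_ifs with h
    · exact mem_reducedResidues.2 ⟨⟨NeZero.one_le, le_rfl⟩, by simpa [h] using hu⟩
    · exact mem_reducedResidues.2 ⟨⟨Nat.one_le_iff_ne_zero.2 h, (ZMod.val_lt _).le⟩, hu⟩
  · obtain ⟨⟨hd1, hdc⟩, -⟩ := mem_reducedResidues.1 hd
    simp only [ZMod.coe_unitOfCoprime, ZMod.val_natCast]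
    rcases hdc.lt_or_eq with hlt | rfl
    · rw [Nat.mod_eq_of_lt hlt, if_neg (by omega)]
    · rw [Nat.mod_self, if_pos rfl]
  · ext
    split_ifs with h
    · rw [ZMod.coe_unitOfCoprime, ZMod.natCast_self, ((ZMod.val_eq_zero _).1 h)]
    · rw [ZMod.coe_unitOfCoprime, ZMod.natCast_zmod_val]
  · rw [ZMod.coe_unitOfCoprime, ZMod.val_natCast, hf d (mem_reducedResidues.1 hd).2]

def unitsChineseRemainder {q r : ℕ} (h : q.Coprime r) :
    (ZMod (q * r))ˣ ≃* (ZMod q)ˣ × (ZMod r)ˣ :=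
  (Units.mapEquiv (ZMod.chineseRemainder h).toMulEquiv).trans MulEquiv.prodUnits

lemma coe_unitsChineseRemainder_fst {q r : ℕ} (h : q.Coprime r) (u : (ZMod (q * r))ˣ) :
    ((unitsChineseRemainder h u).1 : ZMod q) = (u : ZMod (q * r)).cast :=
  Prod.fst_zmod_cast _

lemma coe_unitsChineseRemainder_snd {q r : ℕ} (h : q.Coprime r) (u : (ZMod (q * r))ˣ) :
    ((unitsChineseRemainder h u).2 : ZMod r) = (u : ZMod (q * r)).cast :=
  Prod.snd_zmod_cast _

lemma sum_reducedResidues_mul_eq_mul_sum {R : Type*} [CommSemiring R] {q r : ℕ} [NeZero q]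
    [NeZero r] (hqr : q.Coprime r) (f g : ℕ → R) (hf : ∀ d, d.Coprime q → f (d % q) = f d)
    (hg : ∀ d, d.Coprime r → g (d % r) = g d) :
    ∑ d ∈ reducedResidues (q * r), f d * g d
      = (∑ d ∈ reducedResidues q, f d) * ∑ d ∈ reducedResidues r, g d := by
  have hfg : ∀ d, d.Coprime (q * r) → f (d % (q * r)) * g (d % (q * r)) = f d * g d := by
    intro d hd
    rw [← hf _ ((ZMod.coprime_mod_iff_coprime d _).2 hd).coprime_mul_right_right,
      ← hg _ ((ZMod.coprime_mod_iff_coprime d _).2 hd).coprime_mul_left_right,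
      Nat.mod_mul_right_mod, Nat.mod_mul_left_mod, hf d hd.coprime_mul_right_right,
      hg d hd.coprime_mul_left_right]
  rw [sum_reducedResidues_eq_sum_units _ hfg, sum_reducedResidues_eq_sum_units f hf,
    sum_reducedResidues_eq_sum_units g hg, sum_mul_sum, ← sum_product', univ_product_univ]
  refine Fintype.sum_equiv (unitsChineseRemainder hqr).toEquiv _ _ fun u => ?_
  have hu := ZMod.val_coe_unit_coprime u
  rw [MulEquiv.toEquiv_eq_coe, MulEquiv.coe_toEquiv, coe_unitsChineseRemainder_fst,
    coe_unitsChineseRemainder_snd, ZMod.cast_eq_val, ZMod.cast_eq_val, ZMod.val_natCast,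
    ZMod.val_natCast, hf _ hu.coprime_mul_right_right, hg _ hu.coprime_mul_left_right]

noncomputable def klTerm (κ : ℤ) (c : ℕ) (χ : DirichletCharacter ℂ c) (m n : ℤ) (d : ℕ) : ℂ :=
  (epsd d) ^ (-κ) * (jacobiSym (c : ℤ) d : ℂ) * χ ((d : ZMod c)) *
    eC ((((m * d + n * ((((d : ZMod c)⁻¹).val : ℤ))) : ℤ) : ℝ) / c)

noncomputable def salTerm (q : ℕ) (Ψ : DirichletCharacter ℂ q) (m n : ℤ) (x : ℕ) : ℂ :=
  (jacobiSym (x : ℤ) q : ℂ) * Ψ ((x : ZMod q)) *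
    eC ((((m * x + n * ((((x : ZMod q)⁻¹).val : ℤ))) : ℤ) : ℝ) / q)

lemma KlSum_eq_sum_klTerm (κ : ℤ) (c : ℕ) (χ : DirichletCharacter ℂ c) (m n : ℤ) :
    KlSum κ c χ m n = ∑ d ∈ reducedResidues c, klTerm κ c χ m n d := rfl

lemma SalPsi_eq_sum_salTerm (q : ℕ) (Ψ : DirichletCharacter ℂ q) (m n : ℤ) :
    SalPsi q Ψ m n = ∑ x ∈ reducedResidues q, salTerm q Ψ m n x := rfl

lemma eC_mul_mod_add_div (c d : ℕ) (m k : ℤ) :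
    eC ((((m * (d % c : ℕ) + k : ℤ)) : ℝ) / c) = eC ((((m * d + k : ℤ)) : ℝ) / c) := by
  refine eC_intCast_div_eq_of_modEq ((Int.ModEq.mul_left m ?_).add_right k)
  rw [Int.natCast_mod]
  exact Int.mod_modEq _ _

lemma klTerm_mod_of_four_dvd (κ : ℤ) {c : ℕ} (h4 : 4 ∣ c) (χ : DirichletCharacter ℂ c)
    (m n : ℤ) {d : ℕ} (hd : Odd d) : klTerm κ c χ m n (d % c) = klTerm κ c χ m n d := by
  simp only [klTerm, epsd_mod_of_four_dvd h4, jacobiSym_mod_right_of_four_dvd h4 hd,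
    ZMod.natCast_mod, eC_mul_mod_add_div]

lemma salTerm_mod (q : ℕ) (Ψ : DirichletCharacter ℂ q) (m n : ℤ) (x : ℕ) :
    salTerm q Ψ m n (x % q) = salTerm q Ψ m n x := by
  rw [salTerm, salTerm, eC_mul_mod_add_div, ZMod.natCast_mod, Int.natCast_mod,
    ← jacobiSym.mod_left]

lemma natCast_mul_val_inv_modEq {c d : ℕ} [NeZero c] (hd : d.Coprime c) :
    (d : ℤ) * ((d : ZMod c)⁻¹).val ≡ 1 [ZMOD c] := by
  rw [← ZMod.intCast_eq_intCast_iff]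
  push_cast
  rw [ZMod.natCast_zmod_val, ZMod.coe_mul_inv_eq_one d hd]

lemma eC_div_mul_eq_mul_of_inv {q r : ℕ} (hqr : q.Coprime r) (hq : q ≠ 0) (hr : r ≠ 0)
    {qbar rbar : ℤ} (hqbar : (q : ℤ) * qbar ≡ 1 [ZMOD (r : ℤ)])
    (hrbar : (r : ℤ) * rbar ≡ 1 [ZMOD (q : ℤ)]) (m n : ℤ) {d : ℕ} (hd : d.Coprime (q * r)) :
    eC ((((m * d + n * ((((d : ZMod (q * r))⁻¹).val : ℤ))) : ℤ) : ℝ) / (q * r : ℕ))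
      = eC ((((m * qbar * d + n * qbar * ((((d : ZMod r)⁻¹).val : ℤ))) : ℤ) : ℝ) / r)
        * eC ((((m * rbar * d + n * rbar * ((((d : ZMod q)⁻¹).val : ℤ))) : ℤ) : ℝ) / q) := by
  have : NeZero q := ⟨hq⟩
  have : NeZero r := ⟨hr⟩
  have hD := natCast_mul_val_inv_modEq hd
  rw [Nat.cast_mul] at hD
  have hDq := (ZMod.intCast_eq_intCast_iff _ _ q).2 (hD.of_mul_right _)
  have hDr := (ZMod.intCast_eq_intCast_iff _ _ r).2 (hD.of_mul_left _)
  have hA := (ZMod.intCast_eq_intCast_iff _ _ r).2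
    (natCast_mul_val_inv_modEq hd.coprime_mul_left_right)
  have hB := (ZMod.intCast_eq_intCast_iff _ _ q).2
    (natCast_mul_val_inv_modEq hd.coprime_mul_right_right)
  have hqq := (ZMod.intCast_eq_intCast_iff _ _ r).2 hqbar
  have hrr := (ZMod.intCast_eq_intCast_iff _ _ q).2 hrbar
  set D := ((d : ZMod (q * r))⁻¹).val
  set A := ((d : ZMod r)⁻¹).val
  set B := ((d : ZMod q)⁻¹).val
  push_cast at hDq hDr hA hB hqq hrr
  refine eC_intCast_div_mul_eq_mul hqr hq hr ?_ ?_
  · rw [← ZMod.intCast_eq_intCast_iff]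
    push_cast
    linear_combination ((m : ZMod r) * d + n * A) * hqq + n * D * hA - n * A * hDr
  · rw [← ZMod.intCast_eq_intCast_iff]
    push_cast
    linear_combination ((m : ZMod q) * d + n * B) * hrr + n * D * hB - n * B * hDq

lemma klTerm_mul_eq_klTerm_mul_salTerm (κ : ℤ) {q r : ℕ} (hqr : q.Coprime r) (hq : Odd q)
    (hr : r ≠ 0) (m n : ℤ) {Ψ : DirichletCharacter ℂ (q * r)} {Ψr : DirichletCharacter ℂ r}
    {Ψq : DirichletCharacter ℂ q}
    (hfac : ∀ x : ℤ, Ψ ((x : ZMod (q * r))) = Ψr ((x : ZMod r)) * Ψq ((x : ZMod q)))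
    {qbar rbar : ℤ} (hqbar : (q : ℤ) * qbar ≡ 1 [ZMOD (r : ℤ)])
    (hrbar : (r : ℤ) * rbar ≡ 1 [ZMOD (q : ℤ)]) {d : ℕ} (hd : d.Coprime (q * r))
    (hdodd : Odd d) :
    klTerm κ (q * r) Ψ m n d
      = klTerm (κ - q + 1) r Ψr (m * qbar) (n * qbar) d
        * salTerm q Ψq (m * rbar) (n * rbar) d := by
  have hsign : epsd d ^ (-κ) * (jacobiSym (q * r : ℕ) d : ℂ)
      = epsd d ^ (-(κ - q + 1)) * (jacobiSym r d : ℂ) * (jacobiSym d q : ℂ) := by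
    rw [Nat.cast_mul, jacobiSym.mul_left, Int.cast_mul, ← mul_assoc,
      epsd_zpow_mul_jacobiSym_reciprocity hdodd hq]
    ring
  have hchar : Ψ d = Ψr d * Ψq d := by simpa using hfac d
  rw [klTerm, klTerm, salTerm, eC_div_mul_eq_mul_of_inv hqr hq.pos.ne' hr hqbar hrbar m n hd,
    hchar, hsign]
  ring

theorem stmt6 (κ : ℤ) (q r : ℕ) (h4 : 4 ∣ r) (hqr : Nat.Coprime q r)
    (m n : ℤ) (Ψ : DirichletCharacter ℂ (q * r)) (Ψr : DirichletCharacter ℂ r)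
    (Ψq : DirichletCharacter ℂ q)
    (hfac : ∀ x : ℤ, Ψ ((x : ZMod (q * r))) = Ψr ((x : ZMod r)) * Ψq ((x : ZMod q)))
    (qbar rbar : ℤ) (hqbar : (q : ℤ) * qbar ≡ 1 [ZMOD (r : ℤ)])
    (hrbar : (r : ℤ) * rbar ≡ 1 [ZMOD (q : ℤ)]) :
    KlSum κ (q * r) Ψ m n
      = KlSum (κ - q + 1) r Ψr (m * qbar) (n * qbar) * SalPsi q Ψq (m * rbar) (n * rbar) := by
  obtain rfl | hr := eq_or_ne r 0
  · obtain rfl : q = 1 := by simpa using hqr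
    simp [KlSum]
  have h2 : 2 ∣ r := dvd_trans (by norm_num) h4
  have hq : Odd q := (hqr.coprime_dvd_right h2).odd_of_right
  have : NeZero q := ⟨hq.pos.ne'⟩
  have : NeZero r := ⟨hr⟩
  rw [KlSum_eq_sum_klTerm, KlSum_eq_sum_klTerm, SalPsi_eq_sum_salTerm,
    mul_comm (∑ _ ∈ reducedResidues r, _),
    ← sum_reducedResidues_mul_eq_mul_sum hqr _ _ (fun d _ => salTerm_mod q Ψq _ _ d)
      (fun d hd => klTerm_mod_of_four_dvd _ h4 Ψr _ _ (hd.coprime_dvd_right h2).odd_of_right)]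
  refine sum_congr rfl fun d hd => ?_
  have hd := (mem_reducedResidues.1 hd).2
  rw [klTerm_mul_eq_klTerm_mul_salTerm κ hqr hq hr m n hfac hqbar hrbar hd
    (hd.coprime_dvd_right (dvd_mul_of_dvd_right h2 q)).odd_of_right, mul_comm]
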